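/- arXiv:1510.00373 — 3 statements merged into one kernel-verified Lean document; each statement's English description precedes it below -/
import Mathlib

section
/- Let Q be a symmetric n×n integer matrix whose kernel (over the rationals) has dimension k. Then Q is congruent over the integers (i.e., there exists P in GL(n,ℤ) with PᵀQP of the stated form) to a block matrix with an (n−k)×(n−k) symmetric integer matrix A in the upper-left block, zeros elsewhere, where A is invertible over ℚ. -/
/-!
The kernel of `Q : ℤⁿ → ℤⁿ` is a direct summand of `ℤⁿ`, because the image of `Q` is a free,
hence projective, `ℤ`-module. A basis of `ℤⁿ` whose last vectors span this kernel gives a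
unimodular `P` with `Pᵀ Q P = diag(A, 0)`, and `A` is nondegenerate since a vector killed by `A`
would be a kernel vector in the complementary summand. Over `ℚ`, congruence by `P` preserves rank,
so `A` has full rank `rank Q = n - k`.
-/

open Module

theorem LinearMap.exists_basis_sum_forall_repr_inl_eq_zero_iff {R M N : Type*} [CommRing R]
    [IsDomain R] [IsPrincipalIdealRing R] [AddCommGroup M] [Module R M] [Module.Free R M]
    [Module.Finite R M] [AddCommGroup N] [Module R N] [IsTorsionFree R N] (f : M →ₗ[R] N) :
    ∃ (r s : ℕ) (b : Basis (Fin r ⊕ Fin s) R M),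
      ∀ x, (∀ i, b.repr x (.inl i) = 0) ↔ f x = 0 := by
  obtain ⟨s, hs⟩ := f.rangeRestrict.exists_rightInverse_of_surjective f.range_rangeRestrict
  have hproj : ∀ y : range s, (s.rangeRestrict ∘ₗ f.rangeRestrict) y = y := by
    rintro ⟨_, y, rfl⟩
    ext
    simp [← comp_apply (f := f.rangeRestrict), hs]
  have hcompl : IsCompl (range s) (ker f) := by
    convert isCompl_of_proj hproj using 1
    rw [ker_comp_of_ker_eq_bot _ (by rw [ker_rangeRestrict]; exact ker_eq_bot_of_inverse hs),
      ker_rangeRestrict]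
  let e := Submodule.prodEquivOfIsCompl _ _ hcompl
  refine ⟨_, _, ((finBasis R (range s)).prod (finBasis R (ker f))).map e, fun x => ?_⟩
  obtain ⟨⟨y, z⟩, rfl⟩ := e.surjective x
  have hfe : f (e (y, z)) = f y := by simp [e, Submodule.coe_prodEquivOfIsCompl']
  simp only [Basis.map_repr, LinearEquiv.trans_apply, LinearEquiv.symm_apply_apply,
    Basis.prod_repr_inl, hfe]
  refine (finBasis R (range s)).forall_coord_eq_zero_iff.trans
    ⟨fun h => by simp [h], fun h => ?_⟩
  exact Subtype.ext (Submodule.disjoint_def.mp hcompl.disjoint y y.2 h)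

namespace Matrix

theorem rank_add_finrank_ker_mulVecLin {m n K : Type*} [Fintype m] [Fintype n] [Field K]
    (A : Matrix m n K) :
    A.rank + finrank K (LinearMap.ker A.mulVecLin) = Fintype.card n := by
  rw [rank, LinearMap.finrank_range_add_finrank_ker, finrank_fintype_fun_eq_card]

variable {η ι κ R : Type*} [Fintype η] [CommRing R]

theorem exists_mul_eq_one_and_mulVec_mulVec_eq_zero_iff [DecidableEq η] [IsDomain R]
    [IsPrincipalIdealRing R] (Q : Matrix η η R) :
    ∃ (r s : ℕ) (P : Matrix η (Fin r ⊕ Fin s) R) (P' : Matrix (Fin r ⊕ Fin s) η R),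
      r + s = Fintype.card η ∧ P * P' = 1 ∧ ∀ v, Q *ᵥ (P *ᵥ v) = 0 ↔ ∀ i, v (.inl i) = 0 := by
  obtain ⟨r, s, b, hb⟩ := Q.mulVecLin.exists_basis_sum_forall_repr_inl_eq_zero_iff
  refine ⟨r, s, (Pi.basisFun R η).toMatrix b, b.toMatrix (Pi.basisFun R η), ?_,
    (Pi.basisFun R η).toMatrix_mul_toMatrix_flip b, fun v => ?_⟩
  · simpa using (finrank_eq_card_basis b).symm
  · have hP : (Pi.basisFun R η).toMatrix b *ᵥ v = b.equivFun.symm v := by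
      simpa only [← Basis.equivFun_apply, LinearEquiv.apply_symm_apply, Pi.basisFun_equivFun,
        LinearEquiv.refl_apply] using b.toMatrix_mulVec_repr (Pi.basisFun R η) (b.equivFun.symm v)
    rw [hP, ← mulVecLin_apply, ← hb]
    simp only [← Basis.equivFun_apply, LinearEquiv.apply_symm_apply]

theorem IsSymm.transpose_mul_mul {Q : Matrix η η R} (hQ : Q.IsSymm) (P : Matrix η ι R) :
    (Pᵀ * Q * P).IsSymm := by
  simp [IsSymm, transpose_mul, hQ.eq, Matrix.mul_assoc]

theorem transpose_mul_mul_submatrix {ι' : Type*} (Q : Matrix η η R) (P : Matrix η ι R)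
    (e : ι' ≃ ι) :
    (P.submatrix id e)ᵀ * Q * P.submatrix id e = (Pᵀ * Q * P).submatrix e e := by
  ext i j
  simp [mul_apply]

variable [Fintype ι] [Fintype κ]

theorem rank_transpose_mul_mul_of_mul_eq_one [DecidableEq η] [StrongRankCondition R]
    (Q : Matrix η η R) {P : Matrix η ι R} {P' : Matrix ι η R} (h : P * P' = 1) :
    (Pᵀ * Q * P).rank = Q.rank := by
  refine le_antisymm ((rank_mul_le_left _ _).trans (rank_mul_le_right _ _)) ?_
  calc Q.rank = (P'ᵀ * (Pᵀ * Q * P) * P').rank := by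
        rw [show P'ᵀ * (Pᵀ * Q * P) * P' = (P * P')ᵀ * Q * (P * P') by
          simp only [transpose_mul, Matrix.mul_assoc]]
        simp [h]
    _ ≤ (Pᵀ * Q * P).rank := (rank_mul_le_left _ _).trans (rank_mul_le_right _ _)

theorem rank_fromBlocks_zero_zero_zero [DecidableEq ι] [StrongRankCondition R]
    (A : Matrix ι ι R) :
    (fromBlocks A 0 0 0 : Matrix (ι ⊕ κ) (ι ⊕ κ) R).rank = A.rank := by
  let E : Matrix (ι ⊕ κ) ι R := fromRows 1 0
  have hE : Eᵀ * E = 1 := by simp [E, transpose_fromRows, fromCols_mul_fromRows]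
  rw [← rank_transpose_mul_mul_of_mul_eq_one A hE, transpose_transpose, transpose_fromRows,
    fromRows_mul, fromRows_mul_fromCols]
  simp

variable {Q : Matrix η η R} {P : Matrix η (ι ⊕ κ) R}

theorem transpose_mul_mul_eq_fromBlocks [DecidableEq ι] [DecidableEq κ] (hQ : Q.IsSymm)
    (hker : ∀ v, Q *ᵥ (P *ᵥ v) = 0 ↔ ∀ i, v (.inl i) = 0) :
    Pᵀ * Q * P = fromBlocks (Pᵀ * Q * P).toBlocks₁₁ 0 0 0 := by
  have hcol : ∀ x j, (Pᵀ * Q * P) x (.inr j) = 0 := fun x j => by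
    have hQP : Q *ᵥ (P *ᵥ Pi.single (.inr j) 1) = 0 := (hker _).mpr fun i => by simp
    have := congrArg (Pᵀ *ᵥ ·) hQP
    simp only [mulVec_mulVec, mulVec_single_one, mulVec_zero] at this
    exact congrFun this x
  conv_lhs => rw [← fromBlocks_toBlocks (Pᵀ * Q * P)]
  congr <;> ext i j
  · exact hcol _ _
  · rw [toBlocks₂₁, of_apply, ← (hQ.transpose_mul_mul P).apply, hcol]; rfl
  · exact hcol _ _

theorem det_toBlocks₁₁_transpose_mul_mul_ne_zero [DecidableEq η] [DecidableEq ι] [DecidableEq κ]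
    [IsDomain R] (hQ : Q.IsSymm) (hker : ∀ v, Q *ᵥ (P *ᵥ v) = 0 ↔ ∀ i, v (.inl i) = 0)
    {P' : Matrix (ι ⊕ κ) η R} (hPP' : P * P' = 1) :
    (Pᵀ * Q * P).toBlocks₁₁.det ≠ 0 := by
  rw [Ne, ← exists_mulVec_eq_zero_iff]
  rintro ⟨w, hw0, hw⟩
  have hQP : Q *ᵥ (P *ᵥ Sum.elim w 0) = 0 :=
    calc Q *ᵥ (P *ᵥ Sum.elim w 0) = (P * P')ᵀ *ᵥ (Q *ᵥ (P *ᵥ Sum.elim w 0)) := by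
          rw [hPP', transpose_one, one_mulVec]
      _ = P'ᵀ *ᵥ ((Pᵀ * Q * P) *ᵥ Sum.elim w 0) := by
          simp only [transpose_mul, mulVec_mulVec, Matrix.mul_assoc]
      _ = 0 := by
          rw [transpose_mul_mul_eq_fromBlocks hQ hker, fromBlocks_mulVec]
          simp [Function.comp_def, hw]
  exact hw0 (funext fun i => (hker _).mp hQP i)

theorem card_eq_rank_map [DecidableEq η] [DecidableEq ι] [DecidableEq κ] [IsDomain R]
    {K : Type*} [Field K] (f : R →+* K) (hf : Function.Injective f) (hQ : Q.IsSymm)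
    (hker : ∀ v, Q *ᵥ (P *ᵥ v) = 0 ↔ ∀ i, v (.inl i) = 0) {P' : Matrix (ι ⊕ κ) η R}
    (hPP' : P * P' = 1) :
    Fintype.card ι = (Q.map f).rank := by
  have hPP'f : P.map f * P'.map f = 1 := by
    rw [← Matrix.map_mul, hPP', Matrix.map_one _ f.map_zero f.map_one]
  have hA : IsUnit ((Pᵀ * Q * P).toBlocks₁₁.map f) := by
    rw [isUnit_iff_isUnit_det, ← RingHom.mapMatrix_apply, ← RingHom.map_det, isUnit_iff_ne_zero,
      map_ne_zero_iff f hf]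
    exact det_toBlocks₁₁_transpose_mul_mul_ne_zero hQ hker hPP'
  rw [← rank_transpose_mul_mul_of_mul_eq_one (Q.map f) hPP'f, ← transpose_map, ← Matrix.map_mul,
    ← Matrix.map_mul, transpose_mul_mul_eq_fromBlocks hQ hker, fromBlocks_map,
    Matrix.map_zero _ f.map_zero, Matrix.map_zero _ f.map_zero, Matrix.map_zero _ f.map_zero,
    rank_fromBlocks_zero_zero_zero, rank_of_isUnit _ hA]

end Matrix

open Matrix

/-- a symmetric `n × n` integer matrix whose rational kernel has
dimension `k` is congruent over `ℤ` to a block matrix `diag(A, 0ₖ)` where `A`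
is a symmetric `(n-k) × (n-k)` integer matrix invertible over `ℚ`. -/
theorem symm_int_matrix_congruent_to_block_diag (n k : ℕ)
    (Q : Matrix (Fin n) (Fin n) ℤ) (hQ : Q.IsSymm)
    (hk : Module.finrank ℚ
      (LinearMap.ker (Matrix.mulVecLin (Q.map (Int.cast : ℤ → ℚ)))) = k) :
    ∃ P : Matrix (Fin n) (Fin n) ℤ, IsUnit P.det ∧
      ∃ A : Matrix (Fin (n - k)) (Fin (n - k)) ℤ, A.IsSymm ∧
        (A.map (Int.cast : ℤ → ℚ)).det ≠ 0 ∧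
        ∀ h : n - k + k = n,
          Pᵀ * Q * P =
            (Matrix.fromBlocks A 0 0 (0 : Matrix (Fin k) (Fin k) ℤ)).submatrix
              ((finCongr h).symm.trans finSumFinEquiv.symm)
              ((finCongr h).symm.trans finSumFinEquiv.symm) := by
  obtain ⟨r, s, P, P', hrs, hPP', hker⟩ := Q.exists_mul_eq_one_and_mulVec_mulVec_eq_zero_iff
  have hr : r + k = n := by
    have hcard := card_eq_rank_map (Int.castRingHom ℚ) Int.cast_injective hQ hker hPP'
    rw [Int.coe_castRingHom, Fintype.card_fin] at hcard
    simpa [hcard, hk] using (Q.map (Int.cast : ℤ → ℚ)).rank_add_finrank_ker_mulVecLin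
  rw [Fintype.card_fin] at hrs
  obtain rfl : s = k := by omega
  obtain rfl : r = n - s := by omega
  let φ : Fin n ≃ Fin (n - s) ⊕ Fin s := (finCongr hrs).symm.trans finSumFinEquiv.symm
  refine ⟨P.submatrix id φ, isUnit_det_of_right_inverse (B := P'.submatrix φ id) ?_,
    (Pᵀ * Q * P).toBlocks₁₁, ?_, ?_, fun _ => ?_⟩
  · rw [submatrix_mul_equiv, hPP', submatrix_id_id]
  · have hsymm := transpose_mul_mul_eq_fromBlocks hQ hker ▸ hQ.transpose_mul_mul P
    exact (isSymm_fromBlocks_iff.mp hsymm).1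
  · rw [← Int.cast_det, Int.cast_ne_zero]
    exact det_toBlocks₁₁_transpose_mul_mul_ne_zero hQ hker hPP'
  · rw [transpose_mul_mul_submatrix, ← transpose_mul_mul_eq_fromBlocks hQ hker]
end

section
/- Let g ≥ 1 and n ≥ 1 be integers. Let {Aᵢ}_{i=1−g}^{g−1} and {Bᵢ}_{i=2−g}^{g−1} be abelian groups, and suppose given homomorphisms vᵢ : Aᵢ → Bᵢ (for 2−g ≤ i ≤ g−1) and hᵢ : Aᵢ → B_{i+n} (for those i with 1−g ≤ i ≤ g−1 and 2−g ≤ i+n ≤ g−1; hᵢ = 0 otherwise). Assume vᵢ is surjective for all i ≥ 0 and hᵢ is surjective for all i ≤ 0 (whenever the target lies in the indexing range). Then the map D : ⊕ᵢ Aᵢ → ⊕ⱼ Bⱼ defined by D(aᵢ) = vᵢ(aᵢ) + hᵢ(aᵢ) is surjective. -/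
open DirectSum

/-- the truncated mapping cone map `D = ∑ (vᵢ + hᵢ)` is surjective,
given that `vᵢ` is surjective for `i ≥ 0` and `hᵢ` is surjective for `i ≤ 0`.
Groups outside the index ranges `[1-g, g-1]` (for `A`) and `[2-g, g-1]` (for `B`)
are trivial. -/
theorem truncated_cone_map_surjective (g n : ℤ) (hg : 1 ≤ g) (hn : 1 ≤ n)
    (A B : ℤ → Type)
    [∀ i, AddCommGroup (A i)] [∀ j, AddCommGroup (B j)]
    (hAtriv : ∀ i : ℤ, (i < 1 - g ∨ g - 1 < i) → Subsingleton (A i))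
    (hBtriv : ∀ j : ℤ, (j < 2 - g ∨ g - 1 < j) → Subsingleton (B j))
    (v : ∀ i : ℤ, A i →+ B i) (h : ∀ i : ℤ, A i →+ B (i + n))
    (hv : ∀ i : ℤ, 0 ≤ i → Function.Surjective (v i))
    (hh : ∀ i : ℤ, i ≤ 0 → Function.Surjective (h i)) :
    Function.Surjective
      (DirectSum.toAddMonoid
        (fun i => ((DirectSum.of B i).comp (v i)) +
          ((DirectSum.of B (i + n)).comp (h i))) :
        (⨁ i, A i) →+ ⨁ j, B j) := by
  set D : (⨁ i, A i) →+ ⨁ j, B j :=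
    (DirectSum.toAddMonoid
      (fun i => ((DirectSum.of B i).comp (v i)) +
        ((DirectSum.of B (i + n)).comp (h i)))) with hD
  have hDof : ∀ i (a : A i), D (DirectSum.of A i a)
      = DirectSum.of B i (v i a) + DirectSum.of B (i + n) (h i a) := by
    intro i a
    simp [hD, DirectSum.toAddMonoid_of]
  have key : ∀ (m : ℕ) (j : ℤ) (b : B j),
      ((if 0 ≤ j then g - 1 - j else j - (2 - g)).toNat = m) →
      DirectSum.of B j b ∈ D.range := by
    intro m
    induction m using Nat.strong_induction_on with
    | _ m IH =>
      intro j b hm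
      by_cases hjr : j < 2 - g ∨ g - 1 < j
      · have := hBtriv j hjr
        have hb : b = 0 := Subsingleton.elim b 0
        rw [hb, map_zero]
        exact zero_mem _
      · push_neg at hjr
        obtain ⟨hj1, hj2⟩ := hjr
        by_cases hj0 : 0 ≤ j
        · obtain ⟨a, ha⟩ := hv j hj0 b
          have heq : DirectSum.of B j b
              = D (DirectSum.of A j a) - DirectSum.of B (j + n) (h j a) := by
            rw [hDof, ha]; abel
          rw [heq]
          refine sub_mem ⟨_, rfl⟩ ?_
          by_cases hr : g - 1 < j + n
          · have := hBtriv (j + n) (Or.inr hr)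
            have hz : h j a = 0 := Subsingleton.elim _ _
            rw [hz, map_zero]
            exact zero_mem _
          · refine IH (if 0 ≤ j + n then g - 1 - (j + n)
              else (j + n) - (2 - g)).toNat ?_ _ _ rfl
            have h0n : 0 ≤ j + n := by omega
            simp only [if_pos h0n, if_pos hj0] at hm ⊢
            omega
        · obtain ⟨i, rfl⟩ : ∃ i, j = i + n := ⟨j - n, by ring⟩
          obtain ⟨a, ha⟩ := hh i (by omega) b
          have heq : DirectSum.of B (i + n) b
              = D (DirectSum.of A i a) - DirectSum.of B i (v i a) := by
            rw [hDof, ha]; abel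
          rw [heq]
          refine sub_mem ⟨_, rfl⟩ ?_
          by_cases hr : i < 2 - g
          · have := hBtriv i (Or.inl hr)
            have hz : v i a = 0 := Subsingleton.elim _ _
            rw [hz, map_zero]
            exact zero_mem _
          · refine IH (if 0 ≤ i then g - 1 - i else i - (2 - g)).toNat ?_ _ _ rfl
            have hi0 : ¬ 0 ≤ i := by omega
            simp only [if_neg hi0, if_neg hj0] at hm ⊢
            omega
  intro y
  have : y ∈ D.range := by
    induction y using DirectSum.induction_on with
    | zero => exact zero_mem _
    | of j b => exact key _ j b rfl
    | add x y hx hy => exact add_mem hx hy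
  exact this
end

section
/- Let g ≥ 1, n ≥ 1, and fix s with 0 ≤ s ≤ g−1. Working over 𝔽₂, suppose given vector spaces Aᵢ (1−g ≤ i ≤ g−1) and Bⱼ (2−g ≤ j ≤ g−1), linear maps vᵢ : Aᵢ → Bᵢ and hᵢ : Aᵢ → B_{i+n} (set to zero when the index of the target falls outside [2−g, g−1]). Assume vᵢ is surjective for i ≥ 0 and hᵢ is surjective for i ≤ 0 (when nonzero by the index convention and when the corresponding target index is in range). Then every element of the summand B_s lies in the image of the map D : ⊕Aᵢ → ⊕Bⱼ, D(a)ⱼ = vⱼ(aⱼ) + h_{j−n}(a_{j−n}). -/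
open DirectSum

/-- general-`n` version: for `0 ≤ s ≤ g-1`, every element of the
summand `B s` lies in the image of the truncated mapping cone map
`D = ∑ (vᵢ + hᵢ)`, given `vᵢ` surjective for `i ≥ 0` and `hᵢ` surjective for
`i ≤ 0`, with groups trivial outside the ranges `[1-g, g-1]` and `[2-g, g-1]`. -/
theorem summand_in_image_of_cone_map (g n s : ℤ) (hg : 1 ≤ g) (hn : 1 ≤ n)
    (hs0 : 0 ≤ s) (hs1 : s ≤ g - 1)
    (A B : ℤ → Type)
    [∀ i, AddCommGroup (A i)] [∀ j, AddCommGroup (B j)]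
    (hAtriv : ∀ i : ℤ, (i < 1 - g ∨ g - 1 < i) → Subsingleton (A i))
    (hBtriv : ∀ j : ℤ, (j < 2 - g ∨ g - 1 < j) → Subsingleton (B j))
    (v : ∀ i : ℤ, A i →+ B i) (h : ∀ i : ℤ, A i →+ B (i + n))
    (hv : ∀ i : ℤ, 0 ≤ i → Function.Surjective (v i))
    (hh : ∀ i : ℤ, i ≤ 0 → Function.Surjective (h i)) :
    ∀ b : B s, ∃ x : ⨁ i, A i,
      (DirectSum.toAddMonoid
        (fun i => ((DirectSum.of B i).comp (v i)) +
          ((DirectSum.of B (i + n)).comp (h i))) :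
        (⨁ i, A i) →+ ⨁ j, B j) x = DirectSum.of B s b := by
  set D : (⨁ i, A i) →+ ⨁ j, B j :=
    (DirectSum.toAddMonoid
      (fun i => ((DirectSum.of B i).comp (v i)) +
        ((DirectSum.of B (i + n)).comp (h i)))) with hD
  have key : ∀ k : ℕ, ∀ j : ℤ, 0 ≤ j → g - 1 - j < k → ∀ b : B j,
      ∃ x : ⨁ i, A i, D x = DirectSum.of B j b := by
    intro k
    induction k with
    | zero =>
      intro j hj0 hjk b
      have : g - 1 < j := by omega
      haveI := hBtriv j (Or.inr this)
      have hb : b = 0 := Subsingleton.elim b 0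
      exact ⟨0, by simp [hb]⟩
    | succ m ih =>
      intro j hj0 hjk b
      by_cases hrange : g - 1 < j
      · haveI := hBtriv j (Or.inr hrange)
        have hb : b = 0 := Subsingleton.elim b 0
        exact ⟨0, by simp [hb]⟩
      · obtain ⟨a, ha⟩ := hv j hj0 b
        obtain ⟨x', hx'⟩ := ih (j + n) (by omega) (by omega) (h j a)
        refine ⟨DirectSum.of A j a - x', ?_⟩
        rw [map_sub, hx', hD, DirectSum.toAddMonoid_of]
        simp [ha]
  intro b
  exact key (g - s).toNat s hs0 (by omega) b
end
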